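/- Projected overlap floor for vector-valued hard classes: Let X be uniformly distributed on [0,1], let w* : [0,1] → ℝ^J be measurable and square-integrable, and suppose there exist a unit vector v ∈ ℝ^J, an interval [a,b] ⊆ [0,1], and κ > 0 such that the projected map g(x) := vᵀ w*(x) satisfies g(t) − g(s) ≥ κ(t − s) for all a ≤ s < t ≤ b. Then for every M ≥ 1, inf_{w ∈ W^hard_M} E[‖w*(X) − w(X)‖₂²] ≥ κ² (b − a)³ / (12 M²), where W^hard_M is the class of functions [0,1] → ℝ^J constant on each cell of a partition of [0,1] into at most M intervals. -/

import Mathlib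

/-!
Projecting onto `v` only decreases the error, so it suffices to bound the error of the scalar
function `g = ⟪v, w*⟫`. Since `g - κ·id` is monotone on `[a, b]`, for every constant `c` there is a
crossing point `m` (the supremum of `{g ≤ c}`) with `|g x - c| ≥ κ |x - m|`; hence on a cell of
length `ℓ` on which `w` is constant the error is at least `κ² ∫ (x - m)² ≥ κ² ℓ³ / 12`. The cells
cut `[a, b]` into `M` pieces of total length `b - a`, and by the power mean inequality
`∑ ℓᵢ³ ≥ (b - a)³ / M²`.
-/

open MeasureTheory

/-- The class of `ℝ^J`-valued step functions constant on each cell of a partition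
of `[0,1]` into at most `M` intervals. -/
def hardClass (J M : ℕ) : Set (ℝ → EuclideanSpace ℝ (Fin J)) :=
  {w | ∃ (t : Fin (M + 1) → ℝ) (c : Fin M → EuclideanSpace ℝ (Fin J)),
    Monotone t ∧ t 0 = 0 ∧ t (Fin.last M) = 1 ∧
    ∀ i : Fin M, ∀ x ∈ Set.Ico (t i.castSucc) (t i.succ), w x = c i}

open Set

theorem Fin.sum_succ_sub_castSucc {G : Type*} [AddCommGroup G] {n : ℕ} (u : Fin (n + 1) → G) :
    ∑ i : Fin n, (u i.succ - u i.castSucc) = u (Fin.last n) - u 0 := by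
  induction n with
  | zero => simp
  | succ n ih =>
    have ih' := ih (u ∘ Fin.castSucc)
    simp only [Function.comp_apply, Fin.castSucc_zero] at ih'
    rw [Fin.sum_univ_castSucc]
    simp only [Fin.succ_castSucc, ih', Fin.succ_last]
    abel

theorem Fin.sum_integral_adjacent_intervals {E : Type*} [NormedAddCommGroup E] [NormedSpace ℝ E]
    {f : ℝ → E} {μ : Measure ℝ} {n : ℕ} {u : Fin (n + 1) → ℝ}
    (hf : ∀ i j, IntervalIntegrable f μ (u i) (u j)) :
    ∑ i : Fin n, ∫ x in u i.castSucc..u i.succ, f x ∂μ = ∫ x in u 0..u (Fin.last n), f x ∂μ := by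
  induction n with
  | zero => simp
  | succ n ih =>
    have ih' := ih (u := u ∘ Fin.castSucc) fun i j => hf _ _
    simp only [Function.comp_apply, Fin.castSucc_zero] at ih'
    rw [Fin.sum_univ_castSucc]
    simp only [Fin.succ_castSucc, ih', Fin.succ_last]
    exact intervalIntegral.integral_add_adjacent_intervals (hf _ _) (hf _ _)

theorem Fin.Ico_subset_iUnion_Ico {α : Type*} [LinearOrder α] {n : ℕ} (u : Fin (n + 1) → α) :
    Ico (u 0) (u (Fin.last n)) ⊆ ⋃ i : Fin n, Ico (u i.castSucc) (u i.succ) := by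
  induction n with
  | zero => simp
  | succ n ih =>
    intro x hx
    rcases lt_or_ge x (u (Fin.last n).castSucc) with hlt | hge
    · obtain ⟨i, hi⟩ := mem_iUnion.1 (ih (u ∘ Fin.castSucc) ⟨hx.1, hlt⟩)
      exact mem_iUnion.2 ⟨i.castSucc, by rwa [Fin.succ_castSucc]⟩
    · exact mem_iUnion.2 ⟨Fin.last n, hge, by rw [Fin.succ_last]; exact hx.2⟩

theorem Set.Ioo_projIcc_subset {α : Type*} [LinearOrder α] {a b : α} (h : a ≤ b) (x y : α) :
    Ioo (projIcc a b h x : α) (projIcc a b h y) ⊆ Ioo x y := by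
  rintro z ⟨hxz, hzy⟩
  simp only [coe_projIcc, max_lt_iff, min_lt_iff, lt_max_iff, lt_min_iff] at hxz hzy
  rcases hzy with hza | ⟨hzb, hzy⟩
  · exact absurd hza hxz.1.not_gt
  · exact ⟨hxz.2.resolve_left hzb.not_gt, hzy⟩

theorem MeasureTheory.Integrable.sq_norm_sub_const {α E : Type*} [MeasurableSpace α]
    [NormedAddCommGroup E] {μ : Measure α} [IsFiniteMeasure μ] {f : α → E}
    (hf : AEStronglyMeasurable f μ) (hf2 : Integrable (fun x => ‖f x‖ ^ 2) μ) (c : E) :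
    Integrable (fun x => ‖f x - c‖ ^ 2) μ :=
  (((memLp_two_iff_integrable_sq_norm hf).2 hf2).sub (memLp_const c)).integrable_norm_pow
    two_ne_zero

theorem exists_mul_abs_sub_le_abs_sub {g : ℝ → ℝ} {κ s t : ℝ} (hκ : 0 < κ) (hst : s ≤ t)
    (hg : MonotoneOn (fun x => g x - κ * x) (Icc s t)) (c : ℝ) :
    ∃ m ∈ Icc s t, ∀ x ∈ Icc s t, κ * |x - m| ≤ |g x - c| := by
  -- `s` is inserted so that `A` is nonempty even when `c < g` on all of `[s, t]`.
  set A := insert s {x ∈ Icc s t | g x ≤ c}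
  have hsA : s ∈ A := mem_insert _ _
  have hAt : ∀ y ∈ A, y ≤ t := by rintro y (rfl | hy); exacts [hst, hy.1.2]
  have hA : BddAbove A := ⟨t, hAt⟩
  set m := sSup A
  have hsm : s ≤ m := le_csSup hA hsA
  refine ⟨m, ⟨hsm, csSup_le ⟨s, hsA⟩ hAt⟩, fun x hx => ?_⟩
  rcases lt_trichotomy x m with hxm | rfl | hmx
  · suffices κ * (m - x) ≤ c - g x by
      rw [abs_sub_comm, abs_of_pos (sub_pos.2 hxm), abs_sub_comm]
      exact this.trans (le_abs_self _)
    by_contra! h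
    have hδ : x + (c - g x) / κ < m := by
      rw [← lt_sub_iff_add_lt', div_lt_iff₀ hκ]; linarith
    obtain ⟨z, hzA, hz⟩ := exists_lt_of_lt_csSup ⟨s, hsA⟩ (max_lt hxm hδ)
    rw [max_lt_iff] at hz
    rcases hzA with rfl | ⟨hzI, hzc⟩
    · exact absurd hz.1 (not_lt.2 hx.1)
    have hmono := hg hx hzI hz.1.le
    have : c - g x < κ * (z - x) := by
      rw [← lt_sub_iff_add_lt', div_lt_iff₀ hκ] at hz; linarith [hz.2]
    simp only at hmono
    linarith
  · simp
  · suffices κ * (x - m) ≤ g x - c by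
      rw [abs_of_pos (sub_pos.2 hmx)]
      exact this.trans (le_abs_self _)
    by_contra! h
    have hgx : c < g x := by
      by_contra! hgx
      exact notMem_of_csSup_lt hmx hA (mem_insert_of_mem _ ⟨hx, hgx⟩)
    set y := x - (g x - c) / κ
    have hκy : κ * (x - y) = g x - c := by simp only [y]; field_simp; ring
    have hyx : y < x := by simp only [y]; linarith [div_pos (sub_pos.2 hgx) hκ]
    have hmy : m < y := by nlinarith
    have hyI : y ∈ Icc s t := ⟨hsm.trans hmy.le, hyx.le.trans hx.2⟩
    have hgy : c < g y := by
      by_contra! hgy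
      exact notMem_of_csSup_lt hmy hA (mem_insert_of_mem _ ⟨hyI, hgy⟩)
    have hmono := hg hyI hx hyx.le
    simp only at hmono
    linarith

theorem cube_div_twelve_le_integral_sq_sub {s t m : ℝ} (hsm : s ≤ m) (hmt : m ≤ t) :
    (t - s) ^ 3 / 12 ≤ ∫ x in s..t, (x - m) ^ 2 := by
  rw [intervalIntegral.integral_comp_sub_right (fun x => x ^ 2) m, integral_pow]
  have hp : 0 ≤ m - s := sub_nonneg.2 hsm
  have hq : 0 ≤ t - m := sub_nonneg.2 hmt
  -- with `p = m - s`, `q = t - m`: `4 (p³ + q³) - (p + q)³ = 3 (p + q) (p - q)²`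
  nlinarith [mul_nonneg (add_nonneg hp hq) (sq_nonneg (m - s - (t - m)))]

open scoped RealInnerProductSpace

theorem sq_mul_cube_div_twelve_le_setIntegral_norm_sub_sq {E : Type*} [NormedAddCommGroup E]
    [InnerProductSpace ℝ E] {f : ℝ → E} {v : E} (hv : ‖v‖ ≤ 1) {κ s t : ℝ} (hκ : 0 < κ)
    (hst : s ≤ t) (hf : MonotoneOn (fun x => ⟪v, f x⟫ - κ * x) (Icc s t)) (c : E)
    (hint : IntegrableOn (fun x => ‖f x - c‖ ^ 2) (Ioo s t)) :
    κ ^ 2 * (t - s) ^ 3 / 12 ≤ ∫ x in Ioo s t, ‖f x - c‖ ^ 2 := by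
  obtain ⟨m, ⟨hsm, hmt⟩, hfloor⟩ := exists_mul_abs_sub_le_abs_sub hκ hst hf ⟪v, c⟫
  have hpoint : ∀ x ∈ Ioo s t, κ ^ 2 * (x - m) ^ 2 ≤ ‖f x - c‖ ^ 2 := fun x hx =>
    calc κ ^ 2 * (x - m) ^ 2 = (κ * |x - m|) ^ 2 := by rw [mul_pow, sq_abs]
      _ ≤ |⟪v, f x⟫ - ⟪v, c⟫| ^ 2 := by
        gcongr
        exact hfloor x (Ioo_subset_Icc_self hx)
      _ ≤ ‖f x - c‖ ^ 2 := by
        rw [← inner_sub_right]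
        gcongr
        exact (abs_real_inner_le_norm _ _).trans (mul_le_of_le_one_left (norm_nonneg _) hv)
  calc κ ^ 2 * (t - s) ^ 3 / 12 ≤ κ ^ 2 * ∫ x in s..t, (x - m) ^ 2 := by
        rw [mul_div_assoc]
        gcongr
        exact cube_div_twelve_le_integral_sq_sub hsm hmt
    _ = ∫ x in Ioo s t, κ ^ 2 * (x - m) ^ 2 := by
        rw [← intervalIntegral.integral_const_mul, intervalIntegral.integral_of_le hst,
          integral_Ioc_eq_integral_Ioo]
    _ ≤ ∫ x in Ioo s t, ‖f x - c‖ ^ 2 :=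
        setIntegral_mono_on
          ((Continuous.integrableOn_Icc (by fun_prop)).mono_set Ioo_subset_Icc_self) hint
          measurableSet_Ioo hpoint

theorem sq_mul_cube_div_le_integral_norm_sub_sq_of_partition {E : Type*} [NormedAddCommGroup E]
    [InnerProductSpace ℝ E] {f w : ℝ → E} {v : E} (hv : ‖v‖ ≤ 1) {κ a b : ℝ} (hκ : 0 < κ)
    (hf : MonotoneOn (fun x => ⟪v, f x⟫ - κ * x) (Icc a b))
    (hint : IntegrableOn (fun x => ‖f x - w x‖ ^ 2) (Icc a b))
    {M : ℕ} {u : Fin (M + 1) → ℝ} (hu : Monotone u) (hu0 : u 0 = a) (huM : u (Fin.last M) = b)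
    (c : Fin M → E) (hw : ∀ i, EqOn w (fun _ => c i) (Ioo (u i.castSucc) (u i.succ))) :
    κ ^ 2 * (b - a) ^ 3 / (12 * (M : ℝ) ^ 2) ≤ ∫ x in a..b, ‖f x - w x‖ ^ 2 := by
  have hmem : ∀ i, u i ∈ Icc a b := fun i => ⟨hu0 ▸ hu (Fin.zero_le i), huM ▸ hu (Fin.le_last i)⟩
  have hsub : ∀ i j, Icc (u i) (u j) ⊆ Icc a b := fun i j =>
    Icc_subset_Icc (hmem i).1 (hmem j).2
  have hcell : ∀ i : Fin M, κ ^ 2 * (u i.succ - u i.castSucc) ^ 3 / 12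
      ≤ ∫ x in u i.castSucc..u i.succ, ‖f x - w x‖ ^ 2 := by
    intro i
    have hle := hu (Fin.castSucc_le_succ i)
    have hEq : EqOn (fun x => ‖f x - w x‖ ^ 2) (fun x => ‖f x - c i‖ ^ 2)
        (Ioo (u i.castSucc) (u i.succ)) := fun x hx => by simp only [hw i hx]
    rw [intervalIntegral.integral_of_le hle, integral_Ioc_eq_integral_Ioo,
      setIntegral_congr_fun measurableSet_Ioo hEq]
    exact sq_mul_cube_div_twelve_le_setIntegral_norm_sub_sq hv hκ hle (hf.mono (hsub _ _)) (c i)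
      ((hint.mono_set (Ioo_subset_Icc_self.trans (hsub _ _))).congr_fun hEq measurableSet_Ioo)
  have hpow : (b - a) ^ 3 / (M : ℝ) ^ 2 ≤ ∑ i : Fin M, (u i.succ - u i.castSucc) ^ 3 := by
    have := pow_sum_div_card_le_sum_pow (s := Finset.univ)
      (fun i _ => sub_nonneg.2 (hu (Fin.castSucc_le_succ i))) 2
    rwa [Fin.sum_succ_sub_castSucc, hu0, huM, Finset.card_univ, Fintype.card_fin] at this
  calc κ ^ 2 * (b - a) ^ 3 / (12 * (M : ℝ) ^ 2) = κ ^ 2 / 12 * ((b - a) ^ 3 / (M : ℝ) ^ 2) := by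
        ring
    _ ≤ κ ^ 2 / 12 * ∑ i : Fin M, (u i.succ - u i.castSucc) ^ 3 := by gcongr
    _ = ∑ i : Fin M, κ ^ 2 * (u i.succ - u i.castSucc) ^ 3 / 12 := by
        rw [Finset.mul_sum]
        exact Finset.sum_congr rfl fun _ _ => by ring
    _ ≤ ∑ i : Fin M, ∫ x in u i.castSucc..u i.succ, ‖f x - w x‖ ^ 2 :=
        Finset.sum_le_sum fun i _ => hcell i
    _ = ∫ x in a..b, ‖f x - w x‖ ^ 2 := by
        rw [Fin.sum_integral_adjacent_intervals fun i j =>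
          (hint.mono_set (uIcc_subset_Icc (hmem i) (hmem j))).intervalIntegrable, hu0, huM]

theorem hardClass_nonempty (J : ℕ) {M : ℕ} (hM : 0 < M) : (hardClass J M).Nonempty := by
  have hM' : (0 : ℝ) < M := Nat.cast_pos.2 hM
  refine ⟨fun _ => 0, fun i => (i : ℝ) / M, fun _ => 0, fun i j hij => ?_, by simp, ?_,
    fun _ _ _ => rfl⟩
  · exact div_le_div_of_nonneg_right (Nat.cast_le.2 hij) hM'.le
  · simp [hM'.ne']

theorem integrableOn_Icc_sq_norm_sub_of_mem_hardClass {J M : ℕ}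
    {f w : ℝ → EuclideanSpace ℝ (Fin J)} (hf : Measurable f)
    (hf2 : IntegrableOn (fun x => ‖f x‖ ^ 2) (Icc 0 1)) (hw : w ∈ hardClass J M) :
    IntegrableOn (fun x => ‖f x - w x‖ ^ 2) (Icc 0 1) := by
  obtain ⟨T, c, hT, hT0, hT1, hcell⟩ := hw
  rw [integrableOn_Icc_iff_integrableOn_Ico]
  refine IntegrableOn.mono_set ?_ (hT0 ▸ hT1 ▸ Fin.Ico_subset_iUnion_Ico T)
  refine integrableOn_finite_iUnion.2 fun i => ?_
  have hsub : Ico (T i.castSucc) (T i.succ) ⊆ Icc 0 1 :=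
    Ico_subset_Icc_self.trans (hT0 ▸ hT1 ▸ Icc_subset_Icc (hT (Fin.zero_le _)) (hT (Fin.le_last _)))
  exact (IntegrableOn.mono_set (hf2.sq_norm_sub_const hf.aestronglyMeasurable (c i)) hsub).congr_fun
    (fun x hx => by simp only [hcell i x hx]) measurableSet_Ico

/-- **Projected overlap floor for vector-valued hard classes.** If `X ~ Unif[0,1]`,
`wstar` is measurable and square-integrable, and the projection `x ↦ ⟨v, wstar x⟩`
along a unit vector `v` satisfies κ-growth on `[a,b] ⊆ [0,1]`, then for every
`M ≥ 1` the best `M`-interval hard approximation error is at least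
`κ² (b-a)³ / (12 M²)`. -/
theorem projected_overlap_floor
    {J M : ℕ} (hM : 1 ≤ M)
    (wstar : ℝ → EuclideanSpace ℝ (Fin J)) (hwmeas : Measurable wstar)
    (hwL2 : Integrable (fun x => ‖wstar x‖ ^ 2)
      (volume.restrict (Set.Icc (0 : ℝ) 1)))
    (v : EuclideanSpace ℝ (Fin J)) (hv : ‖v‖ = 1)
    (a b κ : ℝ) (ha : 0 ≤ a) (hab : a ≤ b) (hb : b ≤ 1) (hκ : 0 < κ)
    (hgrowth : ∀ s t : ℝ, a ≤ s → s < t → t ≤ b →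
      κ * (t - s) ≤ (inner ℝ v (wstar t) : ℝ) - (inner ℝ v (wstar s) : ℝ)) :
    κ ^ 2 * (b - a) ^ 3 / (12 * (M : ℝ) ^ 2)
      ≤ sInf ((fun w => ∫ x in Set.Icc (0 : ℝ) 1, ‖wstar x - w x‖ ^ 2) ''
          hardClass J M) := by
  refine le_csInf ((hardClass_nonempty J hM).image _) ?_
  rintro _ ⟨w, hw, rfl⟩
  have hint := integrableOn_Icc_sq_norm_sub_of_mem_hardClass hwmeas hwL2 hw
  obtain ⟨T, c, hT, hT0, hT1, hcell⟩ := hw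
  have hmono : MonotoneOn (fun x => ⟪v, wstar x⟫ - κ * x) (Icc a b) := by
    intro s hs t ht hst
    rcases hst.eq_or_lt with rfl | hlt
    · exact le_rfl
    · linarith [hgrowth s t hs.1 hlt ht.2]
  have hab01 : Icc a b ⊆ Icc 0 1 := Icc_subset_Icc ha hb
  calc κ ^ 2 * (b - a) ^ 3 / (12 * (M : ℝ) ^ 2) ≤ ∫ x in a..b, ‖wstar x - w x‖ ^ 2 :=
        sq_mul_cube_div_le_integral_norm_sub_sq_of_partition hv.le hκ hmono (hint.mono_set hab01)
          (u := fun i => projIcc a b hab (T i)) (fun i j hij => monotone_projIcc hab (hT hij))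
          (by simp [hT0, projIcc_of_le_left hab ha]) (by simp [hT1, projIcc_of_right_le hab hb]) c
          fun i x hx => hcell i x (Ioo_subset_Ico_self (Ioo_projIcc_subset hab _ _ hx))
    _ ≤ ∫ x in Icc 0 1, ‖wstar x - w x‖ ^ 2 := by
        rw [intervalIntegral.integral_of_le hab]
        exact setIntegral_mono_set hint (.of_forall fun _ => sq_nonneg _)
          (.of_forall (Ioc_subset_Icc_self.trans hab01))
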